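/- arXiv:2202.05567 — 3 statements merged into one kernel-verified Lean document; each statement's English description precedes it below -/
import Mathlib

section
/- Let A and B be positive definite d×d real matrices with A ⪰ B (i.e., A - B is positive semidefinite). Then for any vector x ∈ ℝ^d, ‖x‖_{A⁻¹} ≤ ‖x‖_{B⁻¹} · √(det(B⁻¹)/det(A⁻¹)), where ‖x‖_M := √(xᵀ M x). -/
/-!
The quadratic form `x ↦ xᵀ M⁻¹ x` is antitone in `M` for the Loewner order, because of
the variational formula `xᵀ M⁻¹ x = max_y (2 yᵀx - yᵀ M y)`. The determinant is monotone:
with `S = B^{1/2}` one has `A = S C S` where `C - 1 = S⁻¹ (A - B) S⁻¹ ⪰ 0`, so all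
eigenvalues of `C` are at least `1` and `det A = det B · det C ≥ det B`. Finally
`det B⁻¹ / det A⁻¹ = det A / det B`.
-/

open Matrix

namespace Matrix

variable {n : Type*} [Fintype n]

theorem IsHermitian.dotProduct_mulVec_comm {M : Matrix n n ℝ} (hM : M.IsHermitian)
    (u v : n → ℝ) : u ⬝ᵥ M *ᵥ v = M *ᵥ u ⬝ᵥ v := by
  rw [dotProduct_mulVec, ← mulVec_transpose, ← conjTranspose_eq_transpose_of_trivial, hM.eq]

variable [DecidableEq n]

theorem PosDef.two_mul_dotProduct_sub_le {M : Matrix n n ℝ} (hM : M.PosDef) (x y : n → ℝ) :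
    2 * (y ⬝ᵥ x) - y ⬝ᵥ M *ᵥ y ≤ x ⬝ᵥ M⁻¹ *ᵥ x := by
  set z := M⁻¹ *ᵥ x
  have hMz : M *ᵥ z = x := by
    rw [mulVec_mulVec, mul_nonsing_inv _ hM.det_pos.ne'.isUnit, one_mulVec]
  have h := hM.posSemidef.dotProduct_mulVec_nonneg (y - z)
  simp only [star_trivial, mulVec_sub, sub_dotProduct, dotProduct_sub, hMz] at h
  rw [hM.isHermitian.dotProduct_mulVec_comm z y, hMz, dotProduct_comm z x,
    dotProduct_comm x y] at h
  linarith

theorem dotProduct_inv_mulVec_le_of_posSemidef_sub {A B : Matrix n n ℝ} (hB : B.PosDef)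
    (hAB : (A - B).PosSemidef) (x : n → ℝ) : x ⬝ᵥ A⁻¹ *ᵥ x ≤ x ⬝ᵥ B⁻¹ *ᵥ x := by
  have hA : A.PosDef := by simpa using hB.add_posSemidef hAB
  set y := A⁻¹ *ᵥ x
  have hAy : A *ᵥ y = x := by
    rw [mulVec_mulVec, mul_nonsing_inv _ hA.det_pos.ne'.isUnit, one_mulVec]
  have hBA : y ⬝ᵥ B *ᵥ y ≤ y ⬝ᵥ A *ᵥ y := by
    have h := hAB.dotProduct_mulVec_nonneg y
    simp only [star_trivial, sub_mulVec, dotProduct_sub] at h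
    linarith
  calc x ⬝ᵥ A⁻¹ *ᵥ x = 2 * (y ⬝ᵥ x) - y ⬝ᵥ A *ᵥ y := by
        rw [hAy, dotProduct_comm y x]; ring
    _ ≤ 2 * (y ⬝ᵥ x) - y ⬝ᵥ B *ᵥ y := by linarith
    _ ≤ x ⬝ᵥ B⁻¹ *ᵥ x := hB.two_mul_dotProduct_sub_le x y

open scoped MatrixOrder in
theorem one_le_det_of_posSemidef_sub_one {M : Matrix n n ℝ} (hM : (M - 1).PosSemidef) :
    1 ≤ M.det := by
  have hHerm : M.IsHermitian := by simpa using hM.isHermitian.add isHermitian_one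
  have hle : algebraMap ℝ (Matrix n n ℝ) 1 ≤ M := by
    rw [map_one, le_iff]; exact hM
  rw [algebraMap_le_iff_le_spectrum hHerm] at hle
  rw [hHerm.det_eq_prod_eigenvalues]
  exact Finset.one_le_prod fun i _ => hle _ (hHerm.eigenvalues_mem_spectrum_real i)

open scoped MatrixOrder in
theorem det_le_det_of_posSemidef_sub {A B : Matrix n n ℝ} (hB : B.PosDef)
    (hAB : (A - B).PosSemidef) : B.det ≤ A.det := by
  set S := CFC.sqrt B
  have hSS : S * S = B := CFC.sqrt_mul_sqrt_self B hB.posSemidef.nonneg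
  have hdetS : S.det * S.det = B.det := by rw [← det_mul, hSS]
  have hS : IsUnit S.det := by
    refine Ne.isUnit fun h => hB.det_pos.ne' ?_
    rw [← hdetS, h, mul_zero]
  have hSinv : (S⁻¹)ᴴ = S⁻¹ := by
    rw [conjTranspose_nonsing_inv, (CFC.sqrt_nonneg B).posSemidef.isHermitian.eq]
  set C := S⁻¹ * A * S⁻¹
  have hC : (C - 1).PosSemidef := by
    have h := hAB.mul_mul_conjTranspose_same S⁻¹
    rwa [hSinv, mul_sub, sub_mul, ← hSS, ← mul_assoc, nonsing_inv_mul _ hS, one_mul,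
      mul_nonsing_inv _ hS] at h
  have hA : S * C * S = A := by
    simp only [C, ← mul_assoc, mul_nonsing_inv _ hS, one_mul]
    rw [mul_assoc, nonsing_inv_mul _ hS, mul_one]
  calc B.det = B.det * 1 := (mul_one _).symm
    _ ≤ B.det * C.det :=
        mul_le_mul_of_nonneg_left (one_le_det_of_posSemidef_sub_one hC) hB.det_pos.le
    _ = (S * C * S).det := by rw [det_mul (S * C), det_mul S C, ← hdetS]; ring
    _ = A.det := by rw [hA]

end Matrix

theorem weighted_norm_det_trick_general {d : ℕ} (A B : Matrix (Fin d) (Fin d) ℝ)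
    (hB : B.PosDef) (hAB : (A - B).PosSemidef) (x : Fin d → ℝ) :
    Real.sqrt (x ⬝ᵥ A⁻¹ *ᵥ x) ≤
      Real.sqrt (x ⬝ᵥ B⁻¹ *ᵥ x) * Real.sqrt (B⁻¹.det / A⁻¹.det) := by
  have hdet : 1 ≤ B⁻¹.det / A⁻¹.det := by
    rw [det_nonsing_inv, det_nonsing_inv, Ring.inverse_eq_inv', inv_div_inv,
      one_le_div hB.det_pos]
    exact det_le_det_of_posSemidef_sub hB hAB
  calc Real.sqrt (x ⬝ᵥ A⁻¹ *ᵥ x) ≤ Real.sqrt (x ⬝ᵥ B⁻¹ *ᵥ x) :=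
        Real.sqrt_le_sqrt (dotProduct_inv_mulVec_le_of_posSemidef_sub hB hAB x)
    _ ≤ Real.sqrt (x ⬝ᵥ B⁻¹ *ᵥ x) * Real.sqrt (B⁻¹.det / A⁻¹.det) :=
        le_mul_of_one_le_right (Real.sqrt_nonneg _) (Real.one_le_sqrt.mpr hdet)

theorem weighted_norm_det_trick {d : ℕ} (A B : Matrix (Fin d) (Fin d) ℝ)
    (hA : A.PosDef) (hB : B.PosDef) (hAB : (A - B).PosSemidef) (x : Fin d → ℝ) :
    Real.sqrt (x ⬝ᵥ A⁻¹ *ᵥ x) ≤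
      Real.sqrt (x ⬝ᵥ B⁻¹ *ᵥ x) * Real.sqrt (B⁻¹.det / A⁻¹.det) :=
  weighted_norm_det_trick_general A B hB hAB x
end

section
/- Let V̂_0 = λ I_d and V̂_k = V̂_{k-1} + φ_k φ_kᵀ for vectors φ_k ∈ ℝ^d with ‖φ_k‖₂ ≤ 1, and λ > 0. Fix a batch size B dividing T, let M = T/B, and for each t let m_t = B·⌊(t-1)/B⌋ be the start of the batch containing t. Define Ψ = { t ∈ [T] : ‖φ_t‖_{V̂_{m_t}^{-1}} > 2 ‖φ_t‖_{V̂_{t-1}^{-1}} }. Then |Ψ| ≤ (dB)/(2 log 2) · log(1 + T/(dλ)). -/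
/-!
If `0 ≺ B ⪯ A`, whitening by `T = B^{-1/2}` turns `B` into `1` and `A` into `P = TAT ⪰ 1`. Every
eigenvalue of `P` is at least `1`, hence at most their product `det P = det A / det B`; inverting,
`B⁻¹ ⪯ (det A / det B) A⁻¹`. So a bad round `t` forces `det V_{t-1} > 4 det V_{m_t}`: every batch
containing a bad round multiplies the (monotone) determinant by more than `4`, whence
`λ^d 4^{#bad batches} ≤ det V_T ≤ (λ + T/d)^d`, the last step by AM–GM on the eigenvalues of `V_T`.
Each batch contains at most `B` bad rounds.
-/

open Matrix Finset
open scoped MatrixOrder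

lemma Real.prod_le_sum_div_card_pow {ι : Type*} (s : Finset ι) {z : ι → ℝ}
    (hz : ∀ i ∈ s, 0 ≤ z i) : ∏ i ∈ s, z i ≤ ((∑ i ∈ s, z i) / #s) ^ #s := by
  rcases s.eq_empty_or_nonempty with rfl | hs
  · simp
  have hcard : (0 : ℝ) < #s := by exact_mod_cast hs.card_pos
  have hgm := Real.geom_mean_le_arith_mean_weighted s (fun _ => (#s : ℝ)⁻¹) z
    (fun _ _ => by positivity) (by simp [hcard.ne']) hz
  rw [← Finset.mul_sum, ← div_eq_inv_mul, Real.finsetProd_rpow s z hz] at hgm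
  calc ∏ i ∈ s, z i = ((∏ i ∈ s, z i) ^ (#s : ℝ)⁻¹) ^ #s := by
        rw [← Real.rpow_natCast, ← Real.rpow_mul (prod_nonneg hz), inv_mul_cancel₀ hcard.ne',
          Real.rpow_one]
    _ ≤ _ := pow_le_pow_left₀ (Real.rpow_nonneg (prod_nonneg hz) _) hgm _

namespace Matrix

variable {n : Type*}

lemma dotProduct_mulVec_le_of_le [Fintype n] {M N : Matrix n n ℝ} (h : M ≤ N) (x : n → ℝ) :
    x ⬝ᵥ M *ᵥ x ≤ x ⬝ᵥ N *ᵥ x := by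
  simpa [sub_mulVec, dotProduct_sub] using (le_iff.mp h).dotProduct_mulVec_nonneg x

variable [DecidableEq n] {A B P : Matrix n n ℝ}

lemma isHermitian_of_one_le (hP : 1 ≤ P) : P.IsHermitian := by
  simpa using (le_iff.mp hP).isHermitian.add isHermitian_one

variable [Fintype n]

lemma PosSemidef.det_le_trace_div_card_pow (hA : A.PosSemidef) :
    A.det ≤ (A.trace / Fintype.card n) ^ Fintype.card n := by
  have hH := hA.isHermitian
  simpa [hH.det_eq_prod_eigenvalues, hH.trace_eq_sum_eigenvalues] using
    Real.prod_le_sum_div_card_pow univ fun i _ => hA.eigenvalues_nonneg i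

lemma one_le_and_le_det_of_mem_spectrum (hP : 1 ≤ P) {x : ℝ} (hx : x ∈ spectrum ℝ P) :
    1 ≤ x ∧ x ≤ P.det := by
  have hH := isHermitian_of_one_le hP
  have hsp := (CFC.one_le_iff (R := ℝ) P hH.isSelfAdjoint).mp hP
  rw [hH.spectrum_real_eq_range_eigenvalues] at hsp hx
  obtain ⟨i, rfl⟩ := hx
  refine ⟨hsp _ ⟨i, rfl⟩, ?_⟩
  rw [hH.det_eq_prod_eigenvalues]
  simpa using prod_le_prod_of_subset_of_one_le (subset_univ {i})
    (by simpa using (zero_le_one.trans (hsp _ ⟨i, rfl⟩))) (fun j _ _ => hsp _ ⟨j, rfl⟩)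

lemma one_le_det_of_one_le (hP : 1 ≤ P) : 1 ≤ P.det := by
  have hH := isHermitian_of_one_le hP
  have hsp := (CFC.one_le_iff (R := ℝ) P hH.isSelfAdjoint).mp hP
  rw [hH.det_eq_prod_eigenvalues]
  simpa using one_le_prod fun i _ => hsp _ (hH.eigenvalues_mem_spectrum_real i)

lemma one_le_det_smul_inv (hP : 1 ≤ P) : 1 ≤ P.det • P⁻¹ := by
  have hH := isHermitian_of_one_le hP
  have hunit : IsUnit P := (isUnit_iff_isUnit_det P).mpr
    (zero_lt_one.trans_le (one_le_det_of_one_le hP)).ne'.isUnit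
  have hinv : ContinuousOn (·⁻¹) (spectrum ℝ P) := continuousOn_inv₀.mono fun x hx =>
    (zero_lt_one.trans_le (one_le_and_le_det_of_mem_spectrum hP hx).1).ne'
  calc 1 ≤ cfc (fun x => P.det * x⁻¹) P := by
        refine (one_le_cfc_iff (fun x => P.det * x⁻¹) P (continuousOn_const.mul hinv)
          hH.isSelfAdjoint).2 fun x hx => ?_
        obtain ⟨h1, hdet⟩ := one_le_and_le_det_of_mem_spectrum hP hx
        rwa [← div_eq_mul_inv, one_le_div (zero_lt_one.trans_le h1)]
    _ = P.det • P⁻¹ := by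
        rw [cfc_const_mul _ _ _ hinv,
          cfc_ringInverse_id (R := ℝ) _ hunit hH.isSelfAdjoint, nonsing_inv_eq_ringInverse]

lemma conj_inv_conj {T : Matrix n n ℝ} (hT : IsUnit T.det) (X : Matrix n n ℝ) :
    T * (T * X * T)⁻¹ * T = X⁻¹ := by
  rw [mul_inv_rev, mul_inv_rev, ← Matrix.mul_assoc, ← Matrix.mul_assoc, mul_nonsing_inv _ hT,
    Matrix.one_mul, Matrix.mul_assoc, nonsing_inv_mul _ hT, Matrix.mul_one]

lemma PosDef.exists_conj_eq_one (hB : B.PosDef) :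
    ∃ T : Matrix n n ℝ, IsSelfAdjoint T ∧ IsUnit T.det ∧ T * B * T = 1 := by
  set S := CFC.sqrt B
  have hSS : S * S = B := CFC.sqrt_mul_sqrt_self B hB.posSemidef.nonneg
  have hS : IsUnit S.det := by
    refine isUnit_iff_ne_zero.mpr fun h => hB.det_pos.ne' ?_
    rw [← hSS, det_mul, h, zero_mul]
  refine ⟨S⁻¹, IsHermitian.inv (IsSelfAdjoint.of_nonneg (CFC.sqrt_nonneg B)),
    isUnit_nonsing_inv_det S hS, ?_⟩
  rw [← hSS, ← Matrix.mul_assoc, nonsing_inv_mul _ hS, Matrix.one_mul, mul_nonsing_inv _ hS]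

lemma det_conj_eq_div {T : Matrix n n ℝ} (hTBT : T * B * T = 1) (hB : B.det ≠ 0)
    (A : Matrix n n ℝ) : (T * A * T).det = A.det / B.det := by
  have h := congrArg det hTBT
  simp only [det_mul, det_one] at h ⊢
  rw [eq_div_iff hB]
  linear_combination A.det * h

lemma det_le_det_of_le (hB : B.PosDef) (hBA : B ≤ A) : B.det ≤ A.det := by
  obtain ⟨T, hT, -, hTBT⟩ := hB.exists_conj_eq_one
  have h := one_le_det_of_one_le (hTBT ▸ hT.conjugate_le_conjugate hBA)
  rwa [det_conj_eq_div hTBT hB.det_pos.ne', one_le_div hB.det_pos] at h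

lemma inv_le_det_div_smul_inv (hB : B.PosDef) (hBA : B ≤ A) :
    B⁻¹ ≤ (A.det / B.det) • A⁻¹ := by
  obtain ⟨T, hT, hTu, hTBT⟩ := hB.exists_conj_eq_one
  have hP : 1 ≤ T * A * T := hTBT ▸ hT.conjugate_le_conjugate hBA
  calc B⁻¹ = T * 1 * T := by rw [← conj_inv_conj hTu B, hTBT, inv_one]
    _ ≤ T * ((T * A * T).det • (T * A * T)⁻¹) * T :=
        hT.conjugate_le_conjugate (one_le_det_smul_inv hP)
    _ = (A.det / B.det) • A⁻¹ := by
        rw [Matrix.mul_smul, Matrix.smul_mul, conj_inv_conj hTu,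
          det_conj_eq_div hTBT hB.det_pos.ne']

lemma sq_mul_det_lt_det_of_mul_sqrt_lt (hB : B.PosDef) (hBA : B ≤ A) {c : ℝ} (hc : 0 ≤ c)
    {x : n → ℝ} (h : c * √(x ⬝ᵥ A⁻¹ *ᵥ x) < √(x ⬝ᵥ B⁻¹ *ᵥ x)) : c ^ 2 * B.det < A.det := by
  have hA : A.PosDef := by simpa using hB.add_posSemidef (le_iff.mp hBA)
  have hb : 0 ≤ x ⬝ᵥ A⁻¹ *ᵥ x := by simpa using hA.inv.posSemidef.dotProduct_mulVec_nonneg x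
  have hsq : c ^ 2 * (x ⬝ᵥ A⁻¹ *ᵥ x) < x ⬝ᵥ B⁻¹ *ᵥ x := by
    rwa [← Real.sqrt_sq hc, ← Real.sqrt_mul (sq_nonneg c),
      Real.sqrt_lt_sqrt_iff (mul_nonneg (sq_nonneg c) hb)] at h
  have hratio := dotProduct_mulVec_le_of_le (inv_le_det_div_smul_inv hB hBA) x
  rw [smul_mulVec, dotProduct_smul, smul_eq_mul] at hratio
  have := lt_of_mul_lt_mul_right (hsq.trans_le hratio) hb
  rwa [lt_div_iff₀ hB.det_pos] at this

end Matrix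

def designMatrix {n : Type*} [Fintype n] [DecidableEq n] (lam : ℝ) (φ : ℕ → n → ℝ) (k : ℕ) :
    Matrix n n ℝ :=
  lam • 1 + ∑ j ∈ Icc 1 k, vecMulVec (φ j) (φ j)

section designMatrix

variable {n : Type*} [Fintype n] [DecidableEq n] {lam : ℝ} {φ : ℕ → n → ℝ}

lemma designMatrix_mono : Monotone (designMatrix lam φ) := by
  intro k l hkl
  rw [le_iff, designMatrix, designMatrix, add_sub_add_left_eq_sub,
    ← sum_sdiff (Icc_subset_Icc_right hkl), add_sub_cancel_right]
  exact posSemidef_sum _ fun j _ => by simpa using posSemidef_vecMulVec_self_star (φ j)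

lemma posDef_designMatrix (hlam : 0 < lam) (k : ℕ) : (designMatrix lam φ k).PosDef := by
  have h0 : (designMatrix lam φ 0).PosDef := by
    simpa [designMatrix, smul_one_eq_diagonal] using posDef_diagonal_iff.mpr fun _ => hlam
  simpa using h0.add_posSemidef (le_iff.mp (designMatrix_mono (lam := lam) (φ := φ) k.zero_le))

lemma det_designMatrix_zero : (designMatrix lam φ 0).det = lam ^ Fintype.card n := by
  simp [designMatrix]

lemma trace_designMatrix_le (hφ : ∀ j, φ j ⬝ᵥ φ j ≤ 1) (k : ℕ) :
    (designMatrix lam φ k).trace ≤ Fintype.card n * lam + k := by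
  have h : ∑ j ∈ Icc 1 k, φ j ⬝ᵥ φ j ≤ k := by
    simpa using sum_le_sum fun j (_ : j ∈ Icc 1 k) => hφ j
  simpa [designMatrix, trace_sum, trace_vecMulVec, mul_comm] using h

lemma det_designMatrix_le (hlam : 0 < lam) (hφ : ∀ j, φ j ⬝ᵥ φ j ≤ 1) (k : ℕ) :
    (designMatrix lam φ k).det
      ≤ lam ^ Fintype.card n * (1 + k / (Fintype.card n * lam)) ^ Fintype.card n := by
  rw [← mul_pow]
  refine (posDef_designMatrix hlam k).posSemidef.det_le_trace_div_card_pow.trans ?_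
  rcases eq_or_ne (Fintype.card n) 0 with hd | hd
  · simp [hd]
  refine pow_le_pow_left₀ ?_ ?_ _
  · exact div_nonneg (posDef_designMatrix hlam k).posSemidef.trace_nonneg (Nat.cast_nonneg _)
  · have hd' : (Fintype.card n : ℝ) ≠ 0 := Nat.cast_ne_zero.mpr hd
    rw [div_le_iff₀ (by positivity)]
    refine (trace_designMatrix_le hφ k).trans_eq ?_
    field_simp

lemma four_mul_det_designMatrix_lt_of_bad (hlam : 0 < lam) {B t : ℕ} (hB : 0 < B)
    (h : 2 * √(φ t ⬝ᵥ (designMatrix lam φ (t - 1))⁻¹ *ᵥ φ t)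
      < √(φ t ⬝ᵥ (designMatrix lam φ (B * ((t - 1) / B)))⁻¹ *ᵥ φ t)) :
    4 * (designMatrix lam φ (B * ((t - 1) / B))).det
      < (designMatrix lam φ (B * ((t - 1) / B + 1))).det := by
  have hlt := sq_mul_det_lt_det_of_mul_sqrt_lt (posDef_designMatrix hlam _)
    (designMatrix_mono (Nat.mul_div_le (t - 1) B)) zero_le_two h
  have hle := det_le_det_of_le (posDef_designMatrix hlam _)
    (designMatrix_mono (φ := φ) (Nat.lt_mul_div_succ (t - 1) hB).le)
  norm_num at hlt
  exact hlt.trans_le hle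

end designMatrix

lemma pow_card_filter_lt_mul_le {f : ℕ → ℝ} (hf : Monotone f) {c : ℝ} (hc : 0 ≤ c) (M : ℕ) :
    f 0 * c ^ #{i ∈ range M | c * f i < f (i + 1)} ≤ f M := by
  induction M with
  | zero => simp
  | succ M ih =>
    rw [range_add_one, filter_insert]
    split_ifs with hgrow
    · rw [card_insert_of_notMem (by simp), pow_succ]
      calc f 0 * (c ^ #{i ∈ range M | c * f i < f (i + 1)} * c)
          = c * (f 0 * c ^ #{i ∈ range M | c * f i < f (i + 1)}) := by ring
        _ ≤ c * f M := mul_le_mul_of_nonneg_left ih hc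
        _ ≤ f (M + 1) := hgrow.le
    · exact ih.trans (hf M.le_succ)

lemma card_le_card_mul_of_batch_mem {s S : Finset ℕ} {B : ℕ} (hB : 0 < B)
    (h : ∀ t ∈ s, 1 ≤ t ∧ (t - 1) / B ∈ S) : #s ≤ #S * B := by
  calc #s ≤ #(S ×ˢ range B) := by
        refine card_le_card_of_injOn (fun t => ((t - 1) / B, (t - 1) % B)) ?_ ?_
        · intro t ht
          simpa using ⟨(h t ht).2, Nat.mod_lt _ hB⟩
        · intro t ht u hu htu
          have ht1 := (h t ht).1
          have hu1 := (h u hu).1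
          have hdt := Nat.div_add_mod (t - 1) B
          have hdu := Nat.div_add_mod (u - 1) B
          simp only [Prod.mk.injEq] at htu
          rw [htu.1, htu.2] at hdt
          omega
    _ = #S * B := by simp

theorem batch_bad_rounds_bound {d : ℕ} (T B : ℕ) (hB : 0 < B) (hBT : B ∣ T)
    (lam : ℝ) (hlam : 0 < lam) (φ : ℕ → Fin d → ℝ)
    (hφ : ∀ t, Real.sqrt (φ t ⬝ᵥ φ t) ≤ 1)
    (V : ℕ → Matrix (Fin d) (Fin d) ℝ)
    (hV : ∀ k, V k = lam • (1 : Matrix (Fin d) (Fin d) ℝ)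
        + ∑ j ∈ Finset.Icc 1 k, vecMulVec (φ j) (φ j))
    (mt : ℕ → ℕ) (hmt : ∀ t, mt t = B * ((t - 1) / B)) :
    (({t : ℕ | t ∈ Finset.Icc 1 T ∧
        Real.sqrt (φ t ⬝ᵥ (V (mt t))⁻¹ *ᵥ φ t) >
          2 * Real.sqrt (φ t ⬝ᵥ (V (t - 1))⁻¹ *ᵥ φ t)}).ncard : ℝ)
      ≤ (d * B) / (2 * Real.log 2) * Real.log (1 + (T : ℝ) / (d * lam)) := by
  classical
  obtain rfl : V = designMatrix lam φ := funext hV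
  set f : ℕ → ℝ := fun i => (designMatrix lam φ (B * i)).det
  have hf : Monotone f := fun i j hij =>
    det_le_det_of_le (posDef_designMatrix hlam _) (designMatrix_mono (Nat.mul_le_mul_left B hij))
  set S := {i ∈ range (T / B) | 4 * f i < f (i + 1)}
  have hS : (#S : ℝ) * Real.log 4 ≤ d * Real.log (1 + T / (d * lam)) := by
    have hpot := pow_card_filter_lt_mul_le hf zero_le_four (T / B)
    simp only [f, Nat.mul_zero, Nat.mul_div_cancel' hBT, det_designMatrix_zero,
      Fintype.card_fin] at hpot
    have hφ' : ∀ t, φ t ⬝ᵥ φ t ≤ 1 := fun t => Real.sqrt_le_one.mp (hφ t)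
    have hdet := hpot.trans (det_designMatrix_le hlam hφ' T)
    rw [Fintype.card_fin, mul_le_mul_iff_right₀ (pow_pos hlam d)] at hdet
    simpa [Real.log_pow] using Real.log_le_log (by positivity) hdet
  rw [← coe_filter, Set.ncard_coe_finset]
  refine (Nat.cast_le.mpr (card_le_card_mul_of_batch_mem (S := S) hB fun t ht => ?_)).trans ?_
  · obtain ⟨ht, hbad⟩ := mem_filter.mp ht
    obtain ⟨ht1, htT⟩ := mem_Icc.mp ht
    rw [hmt] at hbad
    exact ⟨ht1, mem_filter.mpr ⟨mem_range.mpr (Nat.div_lt_div_of_lt_of_dvd hBT (by omega)),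
      four_mul_det_designMatrix_lt_of_bad hlam hB hbad⟩⟩
  · have hlog4 : Real.log 4 = 2 * Real.log 2 := by
      rw [show (4 : ℝ) = 2 ^ 2 by norm_num, Real.log_pow, Nat.cast_ofNat]
    rw [← hlog4, div_mul_eq_mul_div, le_div_iff₀ (Real.log_pos (by norm_num)), Nat.cast_mul]
    linarith [mul_le_mul_of_nonneg_left hS (Nat.cast_nonneg (α := ℝ) B)]
end

section
/- Let V̂_k = λ I_d + Σ_{j=1}^k φ_j φ_jᵀ with ‖φ_j‖₂ ≤ 1 and λ ≥ 1. Then Σ_{t=1}^T min{‖φ_t‖²_{V̂_{t-1}^{-1}}, 1} ≤ 2 d log(1 + T/(dλ)). -/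
/-!
Each rank-one update multiplies the determinant by `1 + ‖φ_t‖²_{V_{t-1}⁻¹}` (matrix determinant
lemma), so `∑ log (1 + ‖φ_t‖²)` telescopes to `log det V_T - log det V_0`, and
`min u 1 ≤ 2 log (1 + u)` bounds the left-hand side by twice this. Since `tr V_T ≤ dλ + T`,
AM-GM on the eigenvalues gives `log det V_T ≤ d log (λ + T / d)`, while `log det V_0 = d log λ`.
-/

open Matrix Finset

theorem min_le_two_mul_log_one_add {u : ℝ} (hu : 0 ≤ u) : min u 1 ≤ 2 * Real.log (1 + u) := by
  have hlog : u / (1 + u) ≤ Real.log (1 + u) := by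
    have := Real.one_sub_inv_le_log_of_pos (x := 1 + u) (by positivity)
    have h : 1 - (1 + u)⁻¹ = u / (1 + u) := by field_simp; ring
    rwa [h] at this
  rcases le_total u 1 with hu1 | hu1
  · rw [min_eq_left hu1]
    calc u ≤ 2 * (u / (1 + u)) := by rw [mul_div_assoc', le_div_iff₀ (by positivity)]; nlinarith
      _ ≤ _ := by linarith
  · rw [min_eq_right hu1]
    calc (1 : ℝ) ≤ 2 * Real.log 2 := by linarith [Real.log_two_gt_d9]
      _ ≤ _ := by gcongr; linarith

namespace Matrix

theorem det_add_vecMulVec {m α : Type*} [Fintype m] [DecidableEq m] [CommRing α]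
    {A : Matrix m m α} (hA : IsUnit A.det) (u v : m → α) :
    (A + vecMulVec u v).det = A.det * (1 + v ⬝ᵥ A⁻¹ *ᵥ u) := by
  rw [vecMulVec_eq Unit, det_add_replicateCol_mul_replicateRow hA]
  congr 1
  rw [det_unique, add_apply, one_apply_eq, ← replicateRow_vecMul,
    replicateRow_mul_replicateCol_apply, ← dotProduct_mulVec]

theorem PosDef.log_det_le_card_mul_log {n : Type*} [Fintype n] [DecidableEq n]
    {A : Matrix n n ℝ} (hA : A.PosDef) {m : ℝ} (hm : 0 < m)
    (htr : A.trace ≤ Fintype.card n * m) :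
    Real.log A.det ≤ Fintype.card n * Real.log m := by
  have heig := hA.eigenvalues_pos
  have hlog (i : n) :
      Real.log (hA.1.eigenvalues i) ≤ Real.log m + (hA.1.eigenvalues i / m - 1) := by
    have := Real.log_le_sub_one_of_pos (div_pos (heig i) hm)
    rw [Real.log_div (heig i).ne' hm.ne'] at this
    linarith
  have hsum : ∑ i, hA.1.eigenvalues i / m ≤ Fintype.card n := by
    rw [← sum_div, div_le_iff₀ hm]
    simpa [hA.1.trace_eq_sum_eigenvalues] using htr
  calc Real.log A.det = ∑ i, Real.log (hA.1.eigenvalues i) := by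
        simp [hA.1.det_eq_prod_eigenvalues, Real.log_prod fun i _ => (heig i).ne']
    _ ≤ ∑ i, (Real.log m + (hA.1.eigenvalues i / m - 1)) := sum_le_sum fun i _ => hlog i
    _ ≤ Fintype.card n * Real.log m := by
        simp only [sum_add_distrib, sum_sub_distrib, sum_const,
          card_univ, nsmul_eq_mul, mul_one]
        linarith

end Matrix

section RankOneUpdates

variable {n : Type*} [Fintype n] {V : ℕ → Matrix n n ℝ} {φ : ℕ → n → ℝ}

theorem posDef_of_succ_eq_add_vecMulVec (h0 : (V 0).PosDef)
    (hV : ∀ k, V (k + 1) = V k + vecMulVec (φ (k + 1)) (φ (k + 1))) (k : ℕ) :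
    (V k).PosDef := by
  induction k with
  | zero => exact h0
  | succ k ih => rw [hV]; exact ih.add_posSemidef (posSemidef_vecMulVec_self_star (φ (k + 1)))

variable [DecidableEq n]

theorem Matrix.PosDef.dotProduct_inv_mulVec_nonneg {A : Matrix n n ℝ} (hA : A.PosDef)
    (u : n → ℝ) : 0 ≤ u ⬝ᵥ A⁻¹ *ᵥ u := by
  simpa using hA.inv.posSemidef.dotProduct_mulVec_nonneg u

theorem sum_log_one_add_eq_log_det_sub (h0 : (V 0).PosDef)
    (hV : ∀ k, V (k + 1) = V k + vecMulVec (φ (k + 1)) (φ (k + 1))) (T : ℕ) :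
    ∑ t ∈ Icc 1 T, Real.log (1 + φ t ⬝ᵥ (V (t - 1))⁻¹ *ᵥ φ t)
      = Real.log (V T).det - Real.log (V 0).det := by
  have hpos := posDef_of_succ_eq_add_vecMulVec h0 hV
  induction T with
  | zero => simp
  | succ k ih =>
    have hq := (hpos k).dotProduct_inv_mulVec_nonneg (φ (k + 1))
    rw [sum_Icc_succ_top (by omega), ih, Nat.add_sub_cancel, hV,
      det_add_vecMulVec (hpos k).det_pos.ne'.isUnit,
      Real.log_mul (hpos k).det_pos.ne' (by positivity)]
    ring

theorem sum_min_le_two_mul_log_det_sub (h0 : (V 0).PosDef)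
    (hV : ∀ k, V (k + 1) = V k + vecMulVec (φ (k + 1)) (φ (k + 1))) (T : ℕ) :
    ∑ t ∈ Icc 1 T, min (φ t ⬝ᵥ (V (t - 1))⁻¹ *ᵥ φ t) 1
      ≤ 2 * (Real.log (V T).det - Real.log (V 0).det) := by
  rw [← sum_log_one_add_eq_log_det_sub h0 hV, mul_sum]
  exact sum_le_sum fun t _ => min_le_two_mul_log_one_add
    ((posDef_of_succ_eq_add_vecMulVec h0 hV _).dotProduct_inv_mulVec_nonneg _)

end RankOneUpdates

theorem elliptical_potential {d : ℕ} (T : ℕ) (lam : ℝ) (hlam : 1 ≤ lam)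
    (φ : ℕ → Fin d → ℝ) (hφ : ∀ t, Real.sqrt (φ t ⬝ᵥ φ t) ≤ 1)
    (V : ℕ → Matrix (Fin d) (Fin d) ℝ)
    (hV : ∀ k, V k = lam • (1 : Matrix (Fin d) (Fin d) ℝ)
        + ∑ j ∈ Finset.Icc 1 k, vecMulVec (φ j) (φ j)) :
    ∑ t ∈ Finset.Icc 1 T, min (φ t ⬝ᵥ (V (t - 1))⁻¹ *ᵥ φ t) 1
      ≤ 2 * d * Real.log (1 + (T : ℝ) / (d * lam)) := by
  obtain rfl | hd := d.eq_zero_or_pos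
  · simp
  have hlam0 : 0 < lam := by linarith
  have hV0 : V 0 = lam • 1 := by simp [hV]
  have hsucc (k : ℕ) : V (k + 1) = V k + vecMulVec (φ (k + 1)) (φ (k + 1)) := by
    rw [hV, hV, sum_Icc_succ_top (by omega), add_assoc]
  have h0 : (V 0).PosDef := hV0 ▸ PosDef.one.smul hlam0
  have htrace : (V T).trace ≤ d * (lam + T / d) := by
    have hsum : ∑ j ∈ Icc 1 T, (vecMulVec (φ j) (φ j)).trace ≤ T := by
      simpa [trace_vecMulVec] using
        sum_le_card_nsmul (Icc 1 T) _ 1 fun j _ => Real.sqrt_le_one.mp (hφ j)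
    rw [hV, trace_add, trace_smul, trace_one, trace_sum, Fintype.card_fin, smul_eq_mul, mul_add,
      mul_div_cancel₀ _ (by positivity)]
    linarith
  have hdet := (posDef_of_succ_eq_add_vecMulVec h0 hsucc T).log_det_le_card_mul_log
    (m := lam + T / d) (by positivity) (by simpa using htrace)
  calc _ ≤ 2 * (Real.log (V T).det - Real.log (V 0).det) :=
        sum_min_le_two_mul_log_det_sub h0 hsucc T
    _ ≤ 2 * (d * Real.log (lam + T / d) - d * Real.log lam) := by
        rw [Fintype.card_fin] at hdet
        rw [hV0, det_smul, det_one, mul_one, Fintype.card_fin, Real.log_pow]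
        linarith
    _ = 2 * d * Real.log (1 + T / (d * lam)) := by
        rw [← mul_sub, ← Real.log_div (by positivity) hlam0.ne', add_div, div_self hlam0.ne',
          div_div, mul_assoc]
end
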